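/- arXiv:1303.2122 — 4 statements merged into one kernel-verified Lean document; each statement's English description precedes it below -/
import Mathlib

section
/- Let $\sim$ be the congruence on the commutative monoid $(\mathbb{Z}_{\geq 0})^2$ generated by the single relation $(1,1) \sim (2,2)$ (adding relations componentwise, i.e. the smallest monoid congruence containing this pair). Then for all positive integers $m \neq m'$: $(m,0) \not\sim (m',0)$ and $(m,1) \not\sim (m',1)$. -/
/-- The congruence on `ℕ × ℕ` generated by `(1,1) ∼ (2,2)`. -/
def stmt6Con : AddCon (ℕ × ℕ) := addConGen (fun p q => p = (1, 1) ∧ q = (2, 2))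

/-!
The difference `a - b ∈ ℤ` is an additive invariant of `(a, b)` which agrees on `(1,1)` and
`(2,2)`, so it is constant on `stmt6Con`-classes; with the second coordinate fixed it recovers
the first.
-/

def natPairDiff : ℕ × ℕ →+ ℤ :=
  (Nat.castAddMonoidHom ℤ).comp (AddMonoidHom.fst ℕ ℕ) -
    (Nat.castAddMonoidHom ℤ).comp (AddMonoidHom.snd ℕ ℕ)

@[simp]
lemma natPairDiff_apply (p : ℕ × ℕ) : natPairDiff p = (p.1 : ℤ) - p.2 := rfl

lemma stmt6Con_le_ker_natPairDiff : stmt6Con ≤ AddCon.ker natPairDiff :=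
  AddCon.addConGen_le.mpr <| by
    rintro _ _ ⟨rfl, rfl⟩
    simp

lemma eq_of_stmt6Con_of_snd_eq {m m' k : ℕ} (h : stmt6Con (m, k) (m', k)) : m = m' := by
  have hdiff : natPairDiff (m, k) = natPairDiff (m', k) := stmt6Con_le_ker_natPairDiff h
  simpa using hdiff

theorem stmt_6_general (m m' : ℕ) (hne : m ≠ m') :
    ¬ stmt6Con (m, 0) (m', 0) ∧ ¬ stmt6Con (m, 1) (m', 1) :=
  ⟨fun h => hne (eq_of_stmt6Con_of_snd_eq h), fun h => hne (eq_of_stmt6Con_of_snd_eq h)⟩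

theorem stmt_6 (m m' : ℕ) (hm : 0 < m) (hm' : 0 < m') (hne : m ≠ m') :
    ¬ stmt6Con (m, 0) (m', 0) ∧ ¬ stmt6Con (m, 1) (m', 1) :=
  stmt_6_general m m' hne
end

section
/- Let $\sim$ be the monoid congruence on $(\mathbb{Z}_{\geq 0})^2$ generated by the relation $(1,0) \sim (2,2)$. Then for every positive integer $m$, $(m,m) \sim (m/2, 0)$ if $m$ is even, and $(m,m) \sim ((m+1)/2, 1)$ if $m$ is odd; moreover, for positive integers $m \neq m'$ one has $(m,m) \not\sim (m',m')$. -/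
/-!
Adding `(1,0) ∼ (2,2) = (1,0) + (1,2)` to anything with positive first coordinate shows that
such a pair may be shifted by any multiple of `(1,2)`; this yields both normal forms.
Conversely `(a, b) ↦ 2a - b ∈ ℤ` is additive and takes the value `2` on both generators, so it
is constant on classes, and it takes the value `m` at `(m, m)`.
-/

/-- The congruence on `ℕ × ℕ` generated by `(1,0) ∼ (2,2)`. -/
def stmt7Con : AddCon (ℕ × ℕ) := addConGen (fun p q => p = (1, 0) ∧ q = (2, 2))

theorem AddCon.rel_add_nsmul_of_rel_add {M : Type*} [AddCommMonoid M] (c : AddCon M) {u v : M}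
    (h : c u (u + v)) (j : ℕ) : c u (u + j • v) := by
  induction j with
  | zero => simpa using c.refl u
  | succ j ih =>
    have step : c (u + j • v) (u + v + j • v) := c.add h (c.refl _)
    rw [add_assoc, ← succ_nsmul'] at step
    exact c.trans ih step

theorem stmt7Con_succ_fst (a b j : ℕ) : stmt7Con (a + 1, b) (a + 1 + j, b + 2 * j) := by
  have base : stmt7Con (1, 0) ((1, 0) + (1, 2)) := AddConGen.Rel.of _ _ ⟨rfl, rfl⟩
  have shifted := stmt7Con.add (stmt7Con.refl (a, b)) (stmt7Con.rel_add_nsmul_of_rel_add base j)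
  convert shifted using 1 <;> ext <;> simp only [Prod.smul_mk, smul_eq_mul, mul_one, Prod.mk_add_mk] <;> omega

def weight : ℕ × ℕ →+ ℤ where
  toFun p := 2 * p.1 - p.2
  map_zero' := by simp
  map_add' p q := by simp only [Prod.fst_add, Prod.snd_add]; push_cast; ring

theorem stmt7Con_le_ker_weight : stmt7Con ≤ AddCon.ker weight :=
  AddCon.addConGen_le.mpr <| by rintro _ _ ⟨rfl, rfl⟩; rfl

theorem weight_diag (m : ℕ) : weight (m, m) = m := by
  simp only [weight, AddMonoidHom.coe_mk, ZeroHom.coe_mk]; ring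

theorem stmt_7 :
    (∀ m : ℕ, 0 < m →
      (Even m → stmt7Con (m, m) (m / 2, 0)) ∧
      (Odd m → stmt7Con (m, m) ((m + 1) / 2, 1))) ∧
    (∀ m m' : ℕ, 0 < m → 0 < m' → m ≠ m' → ¬ stmt7Con (m, m) (m', m')) := by
  refine ⟨fun m _ => ⟨?_, ?_⟩, fun m m' _ _ hne h => hne ?_⟩
  · rintro ⟨k, rfl⟩
    obtain ⟨n, rfl⟩ : ∃ n, k = n + 1 := ⟨k - 1, by omega⟩
    have key := stmt7Con_succ_fst n 0 (n + 1)
    rw [show 0 + 2 * (n + 1) = n + 1 + (n + 1) by omega] at key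
    rw [show (n + 1 + (n + 1)) / 2 = n + 1 by omega]
    exact key.symm
  · rintro ⟨k, rfl⟩
    have key := stmt7Con_succ_fst k 1 k
    rw [show k + 1 + k = 2 * k + 1 by omega, show 1 + 2 * k = 2 * k + 1 by omega] at key
    rw [show (2 * k + 1 + 1) / 2 = k + 1 by omega]
    exact key.symm
  · have hw := stmt7Con_le_ker_weight h
    rw [AddCon.ker_rel, weight_diag, weight_diag] at hw
    exact_mod_cast hw
end

section
/- Let $n$ be a positive integer, let $A = (a_{ij})$ be an $n \times n$ matrix of non-negative integers, and consider the free commutative monoid $T$ on generators $v_1, \dots, v_n, q_1, \dots, q_n$ with the monoid congruence $\sim$ generated by $v_i \sim q_i + \sum_{j=1}^n a_{ij} v_j$ for each $1 \leq i \leq n$. Then for all positive integers $m \neq m'$, $m(v_1 + \cdots + v_n) \not\sim m'(v_1 + \cdots + v_n)$. -/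
/-- The relations `vᵢ ∼ qᵢ + ∑ⱼ aᵢⱼ vⱼ` on the free commutative monoid with
generators `v₁, …, vₙ, q₁, …, qₙ`, encoded as `(Fin n → ℕ) × (Fin n → ℕ)`
(the `v`-coefficients and the `q`-coefficients). -/
def cohnMonoidRel (n : ℕ) (a : Fin n → Fin n → ℕ) :
    ((Fin n → ℕ) × (Fin n → ℕ)) → ((Fin n → ℕ) × (Fin n → ℕ)) → Prop := fun x y =>
  ∃ i : Fin n, x = (Pi.single i 1, 0) ∧ y = (fun j => a i j, Pi.single i 1)

/-! Give `vᵢ` weight `1` and `qᵢ` weight `1 - ∑ⱼ aᵢⱼ` in `ℤ`. The defining relations then hold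
between weights, so the weight is constant on `∼`-classes, while `m (v₁ + ⋯ + vₙ)` has weight
`m n`. -/

theorem AddMonoidHom.eq_of_addConGen {M N : Type*} [AddMonoid M] [AddMonoid N]
    {r : M → M → Prop} (f : M →+ N) (hf : ∀ x y, r x y → f x = f y) {x y : M}
    (h : addConGen r x y) : f x = f y :=
  (AddCon.ker_rel f).1 (AddCon.addConGen_le.2 hf h)

def cohnWeight (n : ℕ) (a : Fin n → Fin n → ℕ) : (Fin n → ℕ) × (Fin n → ℕ) →+ ℤ where
  toFun x := ∑ i, (x.1 i : ℤ) + ∑ i, (x.2 i : ℤ) * (1 - ∑ j, (a i j : ℤ))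
  map_zero' := by simp
  map_add' x y := by
    simp only [Prod.fst_add, Prod.snd_add, Pi.add_apply, Nat.cast_add, add_mul,
      Finset.sum_add_distrib]
    ring

lemma cohnWeight_apply (n : ℕ) (a : Fin n → Fin n → ℕ) (x : (Fin n → ℕ) × (Fin n → ℕ)) :
    cohnWeight n a x = ∑ i, (x.1 i : ℤ) + ∑ i, (x.2 i : ℤ) * (1 - ∑ j, (a i j : ℤ)) :=
  rfl

lemma cohnWeight_eq_of_cohnMonoidRel (n : ℕ) (a : Fin n → Fin n → ℕ)
    (x y : (Fin n → ℕ) × (Fin n → ℕ)) (h : cohnMonoidRel n a x y) :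
    cohnWeight n a x = cohnWeight n a y := by
  obtain ⟨i, rfl, rfl⟩ := h
  simp [cohnWeight_apply, Pi.single_apply]

lemma cohnWeight_const (n : ℕ) (a : Fin n → Fin n → ℕ) (m : ℕ) :
    cohnWeight n a (fun _ => m, 0) = m * n := by
  simp [cohnWeight_apply, mul_comm]

theorem stmt_11_general (n : ℕ) (hn : 0 < n) (a : Fin n → Fin n → ℕ)
    (m m' : ℕ) (hne : m ≠ m') :
    ¬ addConGen (cohnMonoidRel n a) (fun _ => m, 0) (fun _ => m', 0) := by
  intro h
  have hweight := (cohnWeight n a).eq_of_addConGen (cohnWeight_eq_of_cohnMonoidRel n a) h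
  rw [cohnWeight_const, cohnWeight_const] at hweight
  exact hne (by exact_mod_cast mul_right_cancel₀ (by positivity) hweight)

theorem stmt_11 (n : ℕ) (hn : 0 < n) (a : Fin n → Fin n → ℕ)
    (m m' : ℕ) (hm : 0 < m) (hm' : 0 < m') (hne : m ≠ m') :
    ¬ addConGen (cohnMonoidRel n a) (fun _ => m, 0) (fun _ => m', 0) :=
  stmt_11_general n hn a m m' hne
end

section
/- Let $n$ be a positive integer, $A$ an $n \times n$ non-negative integer matrix, and let $T$ be the free commutative monoid on generators $v_1,\dots,v_n,q_1,\dots,q_n$ with congruence $\sim$ generated by $v_i \sim q_i + \sum_j a_{ij} v_j$. Suppose $s, s' \in T$ both have all $q_i$-coefficients zero, and suppose $\gamma \in T$ is reachable from $s$ by a finite sequence of forward substitutions (each replacing one $v_i$ by $q_i + \sum_j a_{ij} v_j$) and also reachable from $s'$ by such a sequence. Then for each $i$, the number of times the $i$-th substitution is used in the first sequence equals the number used in the second sequence, and the $v_i$-coefficients of $s$ and $s'$ agree for each $i$; in particular $s = s'$. -/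
/-- One forward substitution at index `i`: replace one copy of `vᵢ` by
`qᵢ + ∑ⱼ aᵢⱼ vⱼ`.  Elements of the free commutative monoid on
`v₁,…,vₙ,q₁,…,qₙ` are encoded as pairs `(v-coefficients, q-coefficients)`. -/
def subst (n : ℕ) (a : Fin n → Fin n → ℕ) (i : Fin n)
    (t : (Fin n → ℕ) × (Fin n → ℕ)) : (Fin n → ℕ) × (Fin n → ℕ) :=
  (fun j => t.1 j - (if j = i then 1 else 0) + a i j,
   fun j => t.2 j + (if j = i then 1 else 0))

/-- Apply a finite sequence of forward substitutions. -/
def applySubs (n : ℕ) (a : Fin n → Fin n → ℕ) :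
    List (Fin n) → (Fin n → ℕ) × (Fin n → ℕ) → (Fin n → ℕ) × (Fin n → ℕ)
  | [], t => t
  | i :: L, t => applySubs n a L (subst n a i t)

/-- A sequence of substitutions is valid when at each step the coefficient of
the vertex being substituted is positive. -/
def validSeq (n : ℕ) (a : Fin n → Fin n → ℕ) :
    List (Fin n) → (Fin n → ℕ) × (Fin n → ℕ) → Prop
  | [], _ => True
  | i :: L, t => 0 < t.1 i ∧ validSeq n a L (subst n a i t)

/-!
Each substitution at index `i` adds one `qᵢ`, so the `q`-coefficients of the common end point
`γ` count the substitutions of each index; as `s` and `s'` have no `q`-part, both sequences use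
every index equally often, i.e. they are permutations of each other. Each substitution at `k`
removes one `vₖ` and adds the row `aₖ`, so the `v`-part of the start point is recovered from `γ`
and these multiplicities alone.
-/

lemma subst_snd (n : ℕ) (a : Fin n → Fin n → ℕ) (i j : Fin n)
    (t : (Fin n → ℕ) × (Fin n → ℕ)) :
    (subst n a i t).2 j = t.2 j + if j = i then 1 else 0 := rfl

lemma subst_fst_add_of_pos (n : ℕ) (a : Fin n → Fin n → ℕ) (i j : Fin n)
    {t : (Fin n → ℕ) × (Fin n → ℕ)} (hi : 0 < t.1 i) :
    (subst n a i t).1 j + (if j = i then 1 else 0) = t.1 j + a i j := by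
  simp only [subst]
  split_ifs with h
  · subst h; omega
  · omega

lemma applySubs_snd (n : ℕ) (a : Fin n → Fin n → ℕ) (L : List (Fin n))
    (t : (Fin n → ℕ) × (Fin n → ℕ)) (j : Fin n) :
    (applySubs n a L t).2 j = t.2 j + L.count j := by
  induction L generalizing t with
  | nil => simp [applySubs]
  | cons i L ih =>
    simp only [applySubs, ih, subst_snd, List.count_cons, beq_iff_eq, eq_comm (a := i)]
    omega

lemma applySubs_fst_add_count (n : ℕ) (a : Fin n → Fin n → ℕ) (L : List (Fin n))
    {t : (Fin n → ℕ) × (Fin n → ℕ)} (hL : validSeq n a L t) (j : Fin n) :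
    (applySubs n a L t).1 j + L.count j = t.1 j + (L.map (a · j)).sum := by
  induction L generalizing t with
  | nil => simp [applySubs]
  | cons i L ih =>
    obtain ⟨hi, hL⟩ := hL
    have hstep := subst_fst_add_of_pos n a i j (t := t) hi
    have ih := ih hL
    simp only [applySubs, List.count_cons, List.map_cons, List.sum_cons, beq_iff_eq,
      eq_comm (a := i)] at ih ⊢
    omega

lemma count_eq_of_applySubs_eq (n : ℕ) (a : Fin n → Fin n → ℕ)
    {s s' : (Fin n → ℕ) × (Fin n → ℕ)} (hs : ∀ i, s.2 i = 0) (hs' : ∀ i, s'.2 i = 0)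
    {L L' : List (Fin n)} (hγ : applySubs n a L s = applySubs n a L' s') (i : Fin n) :
    L.count i = L'.count i := by
  have h := applySubs_snd n a L s i
  rwa [hγ, applySubs_snd, hs, hs', zero_add, zero_add, eq_comm] at h

theorem stmt_19_general (n : ℕ) (a : Fin n → Fin n → ℕ)
    (s s' : (Fin n → ℕ) × (Fin n → ℕ))
    (hs : ∀ i, s.2 i = 0) (hs' : ∀ i, s'.2 i = 0)
    (L L' : List (Fin n))
    (hL : validSeq n a L s) (hL' : validSeq n a L' s')
    (hγ : applySubs n a L s = applySubs n a L' s') :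
    (∀ i, L.count i = L'.count i) ∧ (∀ i, s.1 i = s'.1 i) ∧ s = s' := by
  have hcount := count_eq_of_applySubs_eq n a hs hs' hγ
  have hperm : L.Perm L' := List.perm_iff_count.mpr hcount
  have hv : ∀ i, s.1 i = s'.1 i := by
    intro i
    have h := applySubs_fst_add_count n a L hL i
    rw [hγ, hcount, (hperm.map (a · i)).sum_eq] at h
    have h' := applySubs_fst_add_count n a L' hL' i
    omega
  exact ⟨hcount, hv, Prod.ext (funext hv) (funext fun i => (hs i).trans (hs' i).symm)⟩

theorem stmt_19 (n : ℕ) (hn : 0 < n) (a : Fin n → Fin n → ℕ)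
    (s s' : (Fin n → ℕ) × (Fin n → ℕ))
    (hs : ∀ i, s.2 i = 0) (hs' : ∀ i, s'.2 i = 0)
    (L L' : List (Fin n))
    (hL : validSeq n a L s) (hL' : validSeq n a L' s')
    (hγ : applySubs n a L s = applySubs n a L' s') :
    (∀ i, L.count i = L'.count i) ∧ (∀ i, s.1 i = s'.1 i) ∧ s = s' :=
  stmt_19_general n a s s' hs hs' L L' hL hL' hγ
end
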